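/- arXiv:1808.04321 — 4 statements merged into one kernel-verified Lean document; each statement's English description precedes it below -/
import Mathlib

section
/- For every m ≥ 1 there exists b > 0 such that the functions y ↦ η(y) := (y + √(1+y²))/2 and y ↦ ξ(η(y)) := i(1 − (1 + i·b·η(y)^m)^a) (using the principal branch of the power) admit analytic continuation to the horizontal strip S = {y ∈ ℂ : |Im y| < 1}; i.e., for all y in the strip, 1 + i·b·((y+√(1+y²))/2)^m does not lie in the negative real half-line (−∞, 0]. -/
/-!
On the strip `|Im y| < 1` the number `1 + y²` avoids `(-∞, 0]`, so `η` is holomorphic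
there, and `Re η > 0`. Since `4η² - 4ηy = 1`, i.e. `y = η - 1/(4η)`, we also get
`|Im η| ≤ |Im y| < 1`. If `Re (η^m) = 0` then `m |arg η| ≥ π/2`, so
`|η| sin (π/(2m)) ≤ |Im η| < 1`; with `b = sin (π/(2m))^m` this gives `b |Im (η^m)| < 1`.
Hence `1 ± i b η^m` has either nonzero imaginary part or positive real part.
-/

open Complex Set

/-- η(y) = (y + √(1+y²))/2, principal branch. -/
noncomputable def eta0 (y : ℂ) : ℂ := (y + (1 + y ^ 2) ^ ((1 : ℂ) / 2)) / 2

open scoped Real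

lemma one_add_sq_mem_slitPlane {y : ℂ} (hy : |y.im| < 1) : 1 + y ^ 2 ∈ slitPlane := by
  have hy2 : y.im ^ 2 < 1 := by rwa [sq_lt_one_iff_abs_lt_one]
  rw [mem_slitPlane_iff]
  by_cases hreim : y.re * y.im = 0
  · left
    rcases mul_eq_zero.mp hreim with h | h <;>
      simp [pow_two, h] <;> nlinarith [sq_nonneg y.re]
  · right
    simpa [pow_two, mul_comm y.im y.re, ← two_mul] using hreim

lemma cpow_one_div_two_sq (z : ℂ) : (z ^ ((1 : ℂ) / 2)) ^ 2 = z := by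
  simpa only [one_div] using cpow_ofNat_inv_pow z 2

lemma re_cpow_one_div_two_nonneg (z : ℂ) : 0 ≤ (z ^ ((1 : ℂ) / 2)).re := by
  rw [one_div, cpow_inv_two_re]
  exact Real.sqrt_nonneg _

lemma eta0_re_pos {y : ℂ} (hy : |y.im| < 1) : 0 < (eta0 y).re := by
  set s := (1 + y ^ 2) ^ ((1 : ℂ) / 2)
  have hs : 0 ≤ s.re := re_cpow_one_div_two_nonneg _
  have hsq : s ^ 2 = 1 + y ^ 2 := cpow_one_div_two_sq _
  replace hsq := congrArg re hsq
  simp only [pow_two, mul_re, add_re, one_re] at hsq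
  have hy2 : y.im ^ 2 < 1 := by rwa [sq_lt_one_iff_abs_lt_one]
  have hlt : |y.re| < s.re := by
    apply abs_lt_of_sq_lt_sq _ hs
    nlinarith [sq_nonneg s.im]
  have : (eta0 y).re = (y.re + s.re) / 2 := by simp [eta0, s]
  rw [this]
  linarith [neg_abs_le y.re]

lemma four_mul_eta0_sq_sub (y : ℂ) : 4 * eta0 y ^ 2 - 4 * eta0 y * y = 1 := by
  have h := cpow_one_div_two_sq (1 + y ^ 2)
  rw [show (1 + y ^ 2) ^ ((1 : ℂ) / 2) = 2 * eta0 y - y by rw [eta0]; ring] at h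
  linear_combination h

lemma eta0_ne_zero (y : ℂ) : eta0 y ≠ 0 := by
  intro h
  simpa [h] using four_mul_eta0_sq_sub y

lemma eq_eta0_sub_inv (y : ℂ) : y = eta0 y - (4 * eta0 y)⁻¹ := by
  have := eta0_ne_zero y
  field_simp
  linear_combination -four_mul_eta0_sq_sub y

lemma abs_im_eta0_le (y : ℂ) : |(eta0 y).im| ≤ |y.im| := by
  have hy := eq_eta0_sub_inv y
  have hη : 0 < normSq (eta0 y) := normSq_pos.mpr (eta0_ne_zero y)
  set η := eta0 y
  have him : y.im = η.im * (1 + 1 / (4 * normSq η)) := by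
    conv_lhs => rw [hy]
    simp only [sub_im, inv_im, normSq_mul, mul_im, re_ofNat, im_ofNat, normSq_ofNat]
    field_simp
    ring
  rw [him, abs_mul, abs_of_pos (by positivity : (0 : ℝ) < 1 + 1 / (4 * normSq η))]
  have : (0 : ℝ) ≤ 1 / (4 * normSq η) := by positivity
  nlinarith [abs_nonneg η.im]

lemma pi_div_two_le_abs_arg_mul {w : ℂ} {m : ℝ} (hw : w ≠ 0) (h : (w ^ (m : ℂ)).re = 0) :
    π / 2 ≤ |arg w * m| := by
  rw [cpow_ofReal_re] at h
  have hcos : Real.cos (arg w * m) = 0 :=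
    (mul_eq_zero.mp h).resolve_left (Real.rpow_pos_of_pos (norm_pos_iff.mpr hw) m).ne'
  by_contra! hlt
  exact (Real.cos_pos_of_mem_Ioo (abs_lt.mp hlt)).ne' hcos

lemma norm_mul_sin_le_abs_im {w : ℂ} {m : ℝ} (hm : 1 ≤ m) (hw : 0 < w.re)
    (h : (w ^ (m : ℂ)).re = 0) : ‖w‖ * Real.sin (π / (2 * m)) ≤ |w.im| := by
  have hm0 : 0 < m := by linarith
  have harg : |arg w| < π / 2 := abs_arg_lt_pi_div_two_iff.mpr (Or.inl hw)
  have hge : π / (2 * m) ≤ |arg w| := by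
    have := pi_div_two_le_abs_arg_mul (w := w) (ne_of_apply_ne re (by simpa using hw.ne')) h
    rw [abs_mul, abs_of_pos hm0] at this
    rw [div_le_iff₀ (by positivity)]
    linarith
  have hpos : 0 < π / (2 * m) := by positivity
  have hsin : Real.sin (π / (2 * m)) ≤ |Real.sin (arg w)| := by
    rw [Real.abs_sin_eq_sin_abs_of_abs_le_pi (by linarith [Real.pi_pos])]
    apply Real.strictMonoOn_sin.monotoneOn _ _ hge <;> constructor <;>
      linarith [abs_nonneg (arg w), Real.pi_pos]
  calc ‖w‖ * Real.sin (π / (2 * m)) ≤ ‖w‖ * |Real.sin (arg w)| := by gcongr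
    _ = |w.im| := by rw [← norm_mul_sin_arg w, abs_mul, abs_norm]

lemma sin_pi_div_two_mul_pos {m : ℝ} (hm : 1 ≤ m) : 0 < Real.sin (π / (2 * m)) :=
  Real.sin_pos_of_pos_of_lt_pi (by positivity) <| by
    rw [div_lt_iff₀ (by positivity)]; nlinarith [Real.pi_pos]

lemma abs_mul_im_cpow_lt_one {w : ℂ} {m : ℝ} (hm : 1 ≤ m) (hre : 0 < w.re) (him : |w.im| < 1)
    (h : (w ^ (m : ℂ)).re = 0) : |Real.sin (π / (2 * m)) ^ m * (w ^ (m : ℂ)).im| < 1 := by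
  have hs := (sin_pi_div_two_mul_pos hm).le
  calc |Real.sin (π / (2 * m)) ^ m * (w ^ (m : ℂ)).im|
      ≤ Real.sin (π / (2 * m)) ^ m * ‖w‖ ^ m := by
        rw [abs_mul, abs_of_nonneg (Real.rpow_nonneg hs m), ← norm_cpow_real]
        gcongr
        exact abs_im_le_norm _
    _ = (‖w‖ * Real.sin (π / (2 * m))) ^ m := by
        rw [Real.mul_rpow (norm_nonneg w) hs, mul_comm]
    _ < 1 := Real.rpow_lt_one (by positivity)
        ((norm_mul_sin_le_abs_im hm hre h).trans_lt him) (by linarith)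

lemma one_add_I_mul_mem_slitPlane {c : ℝ} {z : ℂ} (hc : c ≠ 0)
    (h : z.re = 0 → |c * z.im| < 1) : 1 + I * c * z ∈ slitPlane := by
  rw [mem_slitPlane_iff]
  by_cases hz : z.re = 0
  · left
    simpa [hz] using (abs_lt.mp (h hz)).2
  · right
    simpa using And.intro hc hz

lemma not_exists_nonpos_eq_of_mem_slitPlane {w : ℂ} (hw : w ∈ slitPlane) :
    ¬ ∃ t : ℝ, t ≤ 0 ∧ w = t := by
  rintro ⟨t, ht, rfl⟩
  exact ht.not_gt (ofReal_mem_slitPlane.mp hw)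

lemma differentiableAt_eta0 {y : ℂ} (hy : |y.im| < 1) : DifferentiableAt ℂ eta0 y :=
  ((differentiableAt_id.add ((differentiableAt_const 1).add (differentiableAt_id.pow 2)
    |>.cpow_const (one_add_sq_mem_slitPlane hy))).div_const 2)

lemma isOpen_abs_im_lt_one : IsOpen {y : ℂ | |y.im| < 1} :=
  isOpen_lt (continuous_abs.comp continuous_im) continuous_const

/-- For every m ≥ 1 there exists b > 0 such that η and y ↦ i(1 − (1 + i b η(y)^m)^a)
admit analytic continuation to the strip {|Im y| < 1}; in particular
1 ± i b η(y)^m never lies in (−∞, 0]. -/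
theorem stmt_0 (a : ℝ) (m : ℝ) (hm : 1 ≤ m) :
    ∃ b : ℝ, 0 < b ∧
      AnalyticOn ℂ eta0 {y : ℂ | |y.im| < 1} ∧
      AnalyticOn ℂ
        (fun y : ℂ => Complex.I * (1 - (1 + Complex.I * b * (eta0 y) ^ (m : ℂ)) ^ (a : ℂ)))
        {y : ℂ | |y.im| < 1} ∧
      (∀ y : ℂ, |y.im| < 1 →
        (¬ ∃ t : ℝ, t ≤ 0 ∧ 1 + Complex.I * b * (eta0 y) ^ (m : ℂ) = (t : ℂ)) ∧
        (¬ ∃ t : ℝ, t ≤ 0 ∧ 1 - Complex.I * b * (eta0 y) ^ (m : ℂ) = (t : ℂ))) := by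
  set b := Real.sin (π / (2 * m)) ^ m
  have hb : 0 < b := Real.rpow_pos_of_pos (sin_pi_div_two_mul_pos hm) m
  have hmem : ∀ y : ℂ, |y.im| < 1 → ∀ c : ℝ, |c| = b →
      1 + I * c * eta0 y ^ (m : ℂ) ∈ slitPlane := fun y hy c hc =>
    one_add_I_mul_mem_slitPlane (by rw [← abs_ne_zero, hc]; exact hb.ne') fun h => by
      rw [abs_mul, hc, ← abs_of_pos hb, ← abs_mul]
      exact abs_mul_im_cpow_lt_one hm (eta0_re_pos hy) ((abs_im_eta0_le y).trans_lt hy) h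
  have hmem_neg : ∀ y : ℂ, |y.im| < 1 → 1 - I * b * eta0 y ^ (m : ℂ) ∈ slitPlane :=
    fun y hy => by simpa [sub_eq_add_neg] using hmem y hy (-b) (by rw [abs_neg, abs_of_pos hb])
  refine ⟨b, hb, ?_, ?_, fun y hy => ⟨not_exists_nonpos_eq_of_mem_slitPlane
    (hmem y hy b (abs_of_pos hb)), not_exists_nonpos_eq_of_mem_slitPlane (hmem_neg y hy)⟩⟩
  · exact DifferentiableOn.analyticOn
      (fun y hy => (differentiableAt_eta0 hy).differentiableWithinAt) isOpen_abs_im_lt_one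
  · refine DifferentiableOn.analyticOn (fun y hy => DifferentiableAt.differentiableWithinAt ?_)
      isOpen_abs_im_lt_one
    have hη := (differentiableAt_eta0 hy).cpow_const (c := (m : ℂ)) (Or.inl (eta0_re_pos hy))
    have hbase := (hη.const_mul (I * b)).const_add 1
    exact ((hbase.cpow_const (hmem y hy b (abs_of_pos hb))).const_sub 1).const_mul I
end

section
/- For α ∈ (0,2), α ≠ 1, and C₊ ∈ ℂ with Re C₊ > 0, the principal-value integral J₋₁(α,C₊) := (1/(2π)) ∫_{ℝ} (e^{−ψ(ξ)} − e^{−|ξ|}) / (−iξ) dξ, where ψ(ξ) = C₊|ξ|^α for ξ>0 and ψ(ξ) = \overline{C₊}|ξ|^α for ξ<0, equals φ₀/(απ), where φ₀ = arg C₊ ∈ (−π/2, π/2). Equivalently J₋₁(α,C₊) = (1/(2πiα)) log(C₊/\overline{C₊}). -/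
/-!
Write `C₊ = a + ib` and let `f` be the integrand. Since `ψ(-ξ) = conj ψ(ξ)`, also
`f(-ξ) = conj f(ξ)`, so the integral over `ℝ` is `2 ∫₀^∞ Re f`, where
`Re f(ξ) = e^{-a ξ^α} sin(b ξ^α) / ξ`. The measure `dξ/ξ` is invariant under `u = ξ^α` up to the
factor `α`, which reduces the integral to `(2/α) ∫₀^∞ e^{-au} sin(bu) / u du`. As a function of `b`
this vanishes at `b = 0` and has derivative `∫₀^∞ e^{-au} cos(bu) du = a / (a² + b²)`, so it equals
`arctan (b / a) = arg C₊`.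
-/

open Complex Set

/-- The symmetrized stable characteristic exponent: ψ(ξ) = C₊|ξ|^α for ξ > 0 and
ψ(ξ) = conj C₊ |ξ|^α for ξ < 0. -/
noncomputable def psiStable (α : ℝ) (C : ℂ) (ξ : ℝ) : ℂ :=
  (if 0 ≤ ξ then C else (starRingEnd ℂ) C) * ((|ξ| : ℝ) : ℂ) ^ (α : ℂ)

open MeasureTheory Filter ComplexConjugate

theorem integral_exp_neg_mul_mul_cos_Ioi {a : ℝ} (ha : 0 < a) (c : ℝ) :
    ∫ u in Ioi 0, Real.exp (-(a * u)) * Real.cos (c * u) = a / (a ^ 2 + c ^ 2) := by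
  have hz : (-a + c * I).re < 0 := by simpa using ha
  have hre : ∀ u : ℝ, Real.exp (-(a * u)) * Real.cos (c * u)
      = RCLike.re (cexp ((-a + c * I) * u)) := by
    intro u
    rw [RCLike.re_to_complex, Complex.exp_re]
    simp
  simp_rw [hre]
  rw [integral_re (integrableOn_exp_mul_complex_Ioi hz 0), integral_exp_mul_complex_Ioi hz 0,
    RCLike.re_to_complex, ofReal_zero, mul_zero, exp_zero, neg_div, ← div_neg, one_div, inv_re,
    normSq_apply]
  simp only [neg_add_rev, neg_neg, add_re, neg_re, mul_re, ofReal_re, I_re, mul_zero, ofReal_im,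
    I_im, mul_one, sub_self, neg_zero, zero_add, add_im, neg_im, mul_im, add_zero, mul_neg, neg_mul]
  ring

theorem integrableOn_exp_neg_mul_mul_sin_div_Ioi {a : ℝ} (ha : 0 < a) (b : ℝ) :
    IntegrableOn (fun u => Real.exp (-(a * u)) * Real.sin (b * u) / u) (Ioi 0) := by
  refine Integrable.mono' ((exp_neg_integrableOn_Ioi 0 ha).const_mul |b|) ?_ ?_
  · exact (ContinuousOn.div (by fun_prop) continuousOn_id fun u hu => ne_of_gt hu)
      |>.aestronglyMeasurable measurableSet_Ioi
  · filter_upwards [ae_restrict_mem measurableSet_Ioi] with u (hu : 0 < u)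
    have hsin : |Real.sin (b * u)| ≤ |b| * u := by
      simpa [abs_mul, abs_of_pos hu] using Real.abs_sin_le_abs (x := b * u)
    rw [Real.norm_eq_abs, abs_div, abs_mul, Real.abs_exp, abs_of_pos hu, div_le_iff₀ hu, neg_mul]
    calc Real.exp (-(a * u)) * |Real.sin (b * u)| ≤ Real.exp (-(a * u)) * (|b| * u) := by gcongr
      _ = |b| * Real.exp (-(a * u)) * u := by ring

theorem hasDerivAt_integral_exp_neg_mul_mul_sin_div {a : ℝ} (ha : 0 < a) (b : ℝ) :
    HasDerivAt (fun b => ∫ u in Ioi 0, Real.exp (-(a * u)) * Real.sin (b * u) / u)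
      (a / (a ^ 2 + b ^ 2)) b := by
  rw [← integral_exp_neg_mul_mul_cos_Ioi ha b]
  refine (hasDerivAt_integral_of_dominated_loc_of_deriv_le (bound := fun u => Real.exp (-(a * u)))
    (F' := fun c u => Real.exp (-(a * u)) * Real.cos (c * u))
    univ_mem (.of_forall fun b => (integrableOn_exp_neg_mul_mul_sin_div_Ioi ha b).1)
    (integrableOn_exp_neg_mul_mul_sin_div_Ioi ha b) (by fun_prop) ?_ ?_ ?_).2
  · refine .of_forall fun u c _ => ?_
    rw [norm_mul, Real.norm_eq_abs, Real.norm_eq_abs, Real.abs_exp]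
    exact mul_le_of_le_one_right (Real.exp_pos _).le (Real.abs_cos_le_one _)
  · simpa [IntegrableOn] using exp_neg_integrableOn_Ioi 0 ha
  · filter_upwards [ae_restrict_mem measurableSet_Ioi] with u (hu : 0 < u) c _
    refine ((((hasDerivAt_mul_const (x := c) u).sin).const_mul
      (Real.exp (-(a * u)))).div_const u).congr_deriv ?_
    field_simp

theorem integral_exp_neg_mul_mul_sin_div_Ioi {a : ℝ} (ha : 0 < a) (b : ℝ) :
    ∫ u in Ioi 0, Real.exp (-(a * u)) * Real.sin (b * u) / u = Real.arctan (b / a) := by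
  have hG : ∀ c, HasDerivAt (fun c => (∫ u in Ioi 0, Real.exp (-(a * u)) * Real.sin (c * u) / u)
      - Real.arctan (c / a)) 0 c := by
    intro c
    have harctan := (Real.hasDerivAt_arctan (c / a)).comp c ((hasDerivAt_id c).div_const a)
    refine ((hasDerivAt_integral_exp_neg_mul_mul_sin_div ha c).sub harctan).congr_deriv ?_
    field_simp
    ring
  have := is_const_of_deriv_eq_zero (fun c => (hG c).differentiableAt) (fun c => (hG c).deriv) b 0
  simpa [sub_eq_zero] using this

theorem integral_comp_rpow_div_Ioi (h : ℝ → ℝ) {p : ℝ} (hp : p ≠ 0) :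
    ∫ x in Ioi 0, h (x ^ p) / x = (∫ u in Ioi 0, h u / u) / |p| := by
  rw [← integral_comp_rpow_Ioi (fun u => h u / u) hp, eq_div_iff (abs_pos.mpr hp).ne',
    ← integral_mul_const]
  refine setIntegral_congr_fun measurableSet_Ioi fun x (hx : 0 < x) => ?_
  rw [smul_eq_mul, Real.rpow_sub_one hx.ne']
  have hxp : 0 < x ^ p := Real.rpow_pos_of_pos hx p
  field_simp

theorem integral_eq_two_mul_integral_Ioi_re {f : ℝ → ℂ} (hf : IntegrableOn f (Ioi 0))
    (hneg : ∀ x, 0 < x → f (-x) = conj (f x)) :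
    ∫ x, f x = ((2 * ∫ x in Ioi 0, (f x).re : ℝ) : ℂ) := by
  have hf_neg : IntegrableOn (fun x => f (-x)) (Ioi 0) :=
    IntegrableOn.congr_fun (conjCLE.toContinuousLinearMap.integrable_comp hf)
      (fun x hx => (hneg x hx).symm) measurableSet_Ioi
  have hf_Iic : IntegrableOn f (Iic 0) := by
    rw [integrableOn_Iic_iff_integrableOn_Iio,
      ← (Measure.measurePreserving_neg volume).integrableOn_comp_preimage
        (Homeomorph.neg ℝ).measurableEmbedding]
    simpa [Function.comp_def] using hf_neg
  calc ∫ x, f x = (∫ x in Iic 0, f x) + ∫ x in Ioi 0, f x :=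
        (intervalIntegral.integral_Iic_add_Ioi hf_Iic hf).symm
    _ = ∫ x in Ioi 0, (f x + f (-x)) := by
        rw [← neg_zero, ← integral_comp_neg_Ioi, neg_zero, add_comm, integral_add hf hf_neg]
    _ = ∫ x in Ioi 0, ((2 * (f x).re : ℝ) : ℂ) :=
        setIntegral_congr_fun measurableSet_Ioi fun x hx => by rw [hneg x hx, add_conj]
    _ = _ := by rw [integral_complex_ofReal, integral_const_mul]

theorem Complex.arg_eq_arctan_of_re_pos {z : ℂ} (hz : 0 < z.re) :
    arg z = Real.arctan (z.im / z.re) := by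
  obtain ⟨hlo, hhi⟩ := abs_lt.mp (abs_arg_lt_pi_div_two_iff.mpr (Or.inl hz))
  rw [← tan_arg, Real.arctan_tan hlo hhi]

theorem norm_cexp_neg_sub_cexp_neg_le {z w : ℂ} (hz : 0 ≤ z.re) (hw : 0 ≤ w.re) :
    ‖cexp (-z) - cexp (-w)‖ ≤ ‖z - w‖ := by
  have hderiv : ∀ x ∈ {c : ℂ | 0 ≤ c.re},
      HasDerivWithinAt (fun c => cexp (-c)) (-cexp (-x)) {c : ℂ | 0 ≤ c.re} x :=
    fun x _ => (((Complex.hasDerivAt_exp (-x)).comp x (hasDerivAt_neg x)).congr_deriv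
      (mul_neg_one _)).hasDerivWithinAt
  have hbound : ∀ x ∈ {c : ℂ | 0 ≤ c.re}, ‖-cexp (-x)‖ ≤ 1 := fun x hx => by
    simpa [Complex.norm_exp] using hx
  simpa using (convex_halfSpace_re_ge 0).norm_image_sub_le_of_norm_hasDerivWithin_le
    hderiv hbound hw hz

section HalfLine

variable {α : ℝ} {D : ℂ}

theorem continuousOn_cexp_neg_mul_rpow_sub_cexp_neg_div (hα : 0 ≤ α) :
    ContinuousOn (fun x : ℝ => (cexp (-(D * ((x ^ α : ℝ) : ℂ))) - cexp (-(x : ℂ))) / x)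
      (Ioi 0) :=
  ((by have := Real.continuous_rpow_const hα; fun_prop : Continuous fun x : ℝ =>
    cexp (-(D * ((x ^ α : ℝ) : ℂ))) - cexp (-(x : ℂ))).continuousOn).div
    (by fun_prop) fun x hx => ofReal_ne_zero.mpr (ne_of_gt hx)

theorem integrableOn_cexp_neg_mul_rpow_sub_cexp_neg_div_Ioc (hα : 0 < α) (hD : 0 ≤ D.re) :
    IntegrableOn (fun x : ℝ => (cexp (-(D * ((x ^ α : ℝ) : ℂ))) - cexp (-(x : ℂ))) / x)
      (Ioc 0 1) := by
  have hbound : IntegrableOn (fun x : ℝ => ‖D‖ * x ^ (α - 1) + 1) (Ioc 0 1) :=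
    (((intervalIntegral.intervalIntegrable_rpow' (by linarith : (-1 : ℝ) < α - 1)).1).const_mul
      ‖D‖).add (integrableOn_const measure_Ioc_lt_top.ne)
  refine hbound.mono' ((continuousOn_cexp_neg_mul_rpow_sub_cexp_neg_div hα.le).mono
    Ioc_subset_Ioi_self |>.aestronglyMeasurable measurableSet_Ioc) ?_
  filter_upwards [ae_restrict_mem measurableSet_Ioc] with x hx'
  have hx : 0 < x := hx'.1
  have hxα : 0 ≤ x ^ α := Real.rpow_nonneg hx.le α
  have hnum : ‖cexp (-(D * ((x ^ α : ℝ) : ℂ))) - cexp (-(x : ℂ))‖ ≤ ‖D‖ * x ^ α + x :=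
    calc _ ≤ ‖D * ((x ^ α : ℝ) : ℂ) - x‖ :=
          norm_cexp_neg_sub_cexp_neg_le (by simpa using mul_nonneg hD hxα) (by simpa using hx.le)
      _ ≤ ‖D * ((x ^ α : ℝ) : ℂ)‖ + ‖(x : ℂ)‖ := norm_sub_le _ _
      _ = ‖D‖ * x ^ α + x := by simp [abs_of_nonneg hxα, abs_of_pos hx]
  calc _ = ‖cexp (-(D * ((x ^ α : ℝ) : ℂ))) - cexp (-(x : ℂ))‖ / x := by
        simp [abs_of_pos hx]
    _ ≤ (‖D‖ * x ^ α + x) / x := by gcongr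
    _ = ‖D‖ * x ^ (α - 1) + 1 := by
        rw [add_div, mul_div_assoc, ← Real.rpow_sub_one hx.ne', div_self hx.ne']

theorem integrableOn_cexp_neg_mul_rpow_sub_cexp_neg_div_Ioi_one (hα : 0 < α) (hD : 0 < D.re) :
    IntegrableOn (fun x : ℝ => (cexp (-(D * ((x ^ α : ℝ) : ℂ))) - cexp (-(x : ℂ))) / x)
      (Ioi 1) := by
  have hexp_rpow : IntegrableOn (fun x : ℝ => Real.exp (-D.re * x ^ α)) (Ioi 1) := by
    simpa using (integrableOn_rpow_mul_exp_neg_mul_rpow (s := 0) (by norm_num) hα hD).mono_set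
      (Ioi_subset_Ioi zero_le_one)
  have hbound : IntegrableOn (fun x : ℝ => Real.exp (-D.re * x ^ α) + Real.exp (-1 * x)) (Ioi 1) :=
    Integrable.add hexp_rpow (exp_neg_integrableOn_Ioi 1 one_pos)
  refine hbound.mono' ((continuousOn_cexp_neg_mul_rpow_sub_cexp_neg_div hα.le).mono
    (Ioi_subset_Ioi zero_le_one) |>.aestronglyMeasurable measurableSet_Ioi) ?_
  filter_upwards [ae_restrict_mem measurableSet_Ioi] with x (hx : 1 < x)
  calc _ ≤ ‖cexp (-(D * ((x ^ α : ℝ) : ℂ))) - cexp (-(x : ℂ))‖ := by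
        rw [norm_div]
        exact div_le_self (norm_nonneg _) (by simpa [abs_of_pos (zero_lt_one.trans hx)] using hx.le)
    _ ≤ _ := (norm_sub_le _ _).trans_eq (by simp [Complex.norm_exp])

theorem integrableOn_cexp_neg_mul_rpow_sub_cexp_neg_div (hα : 0 < α) (hD : 0 < D.re) :
    IntegrableOn (fun x : ℝ => (cexp (-(D * ((x ^ α : ℝ) : ℂ))) - cexp (-(x : ℂ))) / x)
      (Ioi 0) := by
  rw [← Ioc_union_Ioi_eq_Ioi zero_le_one]
  exact (integrableOn_cexp_neg_mul_rpow_sub_cexp_neg_div_Ioc hα hD.le).union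
    (integrableOn_cexp_neg_mul_rpow_sub_cexp_neg_div_Ioi_one hα hD)

end HalfLine

noncomputable def jIntegrand (α : ℝ) (C : ℂ) (ξ : ℝ) : ℂ :=
  (cexp (-psiStable α C ξ) - cexp (-(|ξ| : ℝ))) / (-I * (ξ : ℂ))

section Integrand

variable (α : ℝ) (C : ℂ) {x : ℝ}

theorem psiStable_of_pos (hx : 0 < x) : psiStable α C x = C * ((x ^ α : ℝ) : ℂ) := by
  rw [psiStable, if_pos hx.le, abs_of_pos hx, ofReal_cpow hx.le]

theorem psiStable_neg (hx : 0 < x) : psiStable α C (-x) = conj (psiStable α C x) := by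
  rw [psiStable_of_pos α C hx, psiStable, if_neg (by linarith), abs_neg, abs_of_pos hx,
    ← ofReal_cpow hx.le, map_mul, conj_ofReal]

theorem jIntegrand_of_pos (hx : 0 < x) :
    jIntegrand α C x = I * ((cexp (-(C * ((x ^ α : ℝ) : ℂ))) - cexp (-(x : ℂ))) / x) := by
  rw [jIntegrand, psiStable_of_pos α C hx, abs_of_pos hx, div_mul_eq_div_div, div_neg, div_I,
    neg_neg, mul_div_right_comm, mul_comm]

theorem jIntegrand_neg (hx : 0 < x) : jIntegrand α C (-x) = conj (jIntegrand α C x) := by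
  simp only [jIntegrand, psiStable_neg α C hx, map_div₀, map_sub, map_mul, map_neg, ← exp_conj,
    conj_ofReal, conj_I, abs_neg, ofReal_neg]
  ring_nf

theorem re_jIntegrand_of_pos (hx : 0 < x) :
    (jIntegrand α C x).re = Real.exp (-(C.re * x ^ α)) * Real.sin (C.im * x ^ α) / x := by
  rw [jIntegrand_of_pos α C hx, I_mul_re, div_ofReal_im, sub_im, exp_im, ← ofReal_neg,
    exp_ofReal_im, neg_re, neg_im, re_mul_ofReal, im_mul_ofReal, Real.sin_neg]
  ring

end Integrand

theorem stmt_5_general (α : ℝ) (C : ℂ) (hα : α ∈ Set.Ioo (0 : ℝ) 2)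
    (hC : 0 < C.re) :
    (1 / (2 * Real.pi) : ℂ) *
      (∫ ξ : ℝ, (Complex.exp (-psiStable α C ξ) - Complex.exp (-(|ξ| : ℝ))) /
        (-Complex.I * (ξ : ℂ))) =
    ((Complex.arg C / (α * Real.pi) : ℝ) : ℂ) := by
  have hint : IntegrableOn (jIntegrand α C) (Ioi 0) :=
    IntegrableOn.congr_fun ((integrableOn_cexp_neg_mul_rpow_sub_cexp_neg_div hα.1 hC).const_mul I)
      (fun x hx => (jIntegrand_of_pos α C hx).symm) measurableSet_Ioi
  have hre : ∫ x in Ioi 0, (jIntegrand α C x).re = Real.arctan (C.im / C.re) / α := by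
    rw [setIntegral_congr_fun measurableSet_Ioi fun x hx => re_jIntegrand_of_pos α C hx,
      integral_comp_rpow_div_Ioi (fun u => Real.exp (-(C.re * u)) * Real.sin (C.im * u)) hα.1.ne',
      integral_exp_neg_mul_mul_sin_div_Ioi hC, abs_of_pos hα.1]
  change (1 / (2 * Real.pi) : ℂ) * ∫ ξ, jIntegrand α C ξ = _
  rw [integral_eq_two_mul_integral_Ioi_re hint fun x hx => jIntegrand_neg α C hx, hre,
    arg_eq_arctan_of_re_pos hC]
  push_cast
  field_simp

/-- For α ∈ (0,2), α ≠ 1, Re C₊ > 0: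
J₋₁(α,C₊) = (1/(2π)) ∫ (e^{−ψ(ξ)} − e^{−|ξ|})/(−iξ) dξ = φ₀/(απ), φ₀ = arg C₊. -/
theorem stmt_5 (α : ℝ) (C : ℂ) (hα : α ∈ Set.Ioo (0 : ℝ) 2) (hα1 : α ≠ 1)
    (hC : 0 < C.re) :
    (1 / (2 * Real.pi) : ℂ) *
      (∫ ξ : ℝ, (Complex.exp (-psiStable α C ξ) - Complex.exp (-(|ξ| : ℝ))) /
        (-Complex.I * (ξ : ℂ))) =
    ((Complex.arg C / (α * Real.pi) : ℝ) : ℂ) :=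
  stmt_5_general α C hα hC
end

section
/- For α ∈ (0,2), C₊ with Re(C₊ e^{iαφ}) > 0 for all φ in an interval, and x' ≠ 0, the function f(y) = e^{y} [ e^{−ix' e^{iω+y} − C₊ e^{α(iω+y)}} − e^{−C₊ e^{α(iω+y)}} ] satisfies, as y → −∞, f(y) = −ix' e^{iω} e^{2y} + R(y), where |R(y)| ≤ C(y) ( (x')² e^{3y}/2 + |x'||C₊| e^{(2+α)y} ) with C(y) → 1 as y → −∞. -/
open Complex Filter Set

/-!
With `z = -i x' e^{iω+y}` and `w = -C₊ e^{α(iω+y)}`, the difference between the integrand and its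
leading term is `e^y (e^{z+w} - e^w - z) = e^y (e^w (e^z - 1 - z) + (e^w - 1) z)`. Tail bounds of
the exponential series give `|e^z - 1 - z| ≤ |z|²/2 · e^{|z|}` and `|e^w - 1| ≤ |w| e^{|w|}`, so
the remainder is at most `e^{|z|+|w|}` times the stated majorant, and `|z|, |w| → 0` as `y → -∞`.
-/

namespace Complex

theorem norm_exp_sub_sum_le_norm_pow_div_mul_exp (x : ℂ) (n : ℕ) :
    ‖exp x - ∑ m ∈ Finset.range n, x ^ m / m.factorial‖ ≤
      ‖x‖ ^ n / n.factorial * Real.exp ‖x‖ := by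
  have htail : HasSum (fun m ↦ x ^ (m + n) / (m + n).factorial)
      (exp x - ∑ m ∈ Finset.range n, x ^ m / m.factorial) := by
    refine (hasSum_nat_add_iff' n).mpr ?_
    rw [exp_eq_exp_ℂ]
    exact NormedSpace.expSeries_div_hasSum_exp x
  have hmajorant : HasSum (fun m ↦ ‖x‖ ^ n / n.factorial * (‖x‖ ^ m / m.factorial))
      (‖x‖ ^ n / n.factorial * Real.exp ‖x‖) := by
    rw [Real.exp_eq_exp_ℝ]
    exact (NormedSpace.expSeries_div_hasSum_exp ‖x‖).mul_left _
  refine htail.norm_le_of_bounded hmajorant fun m ↦ ?_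
  have hfac : (m.factorial * n.factorial : ℝ) ≤ (m + n).factorial := by
    exact_mod_cast Nat.le_of_dvd (Nat.factorial_pos _)
      (Nat.factorial_mul_factorial_dvd_factorial_add m n)
  rw [norm_div, norm_pow, RCLike.norm_natCast, pow_add, div_mul_div_comm, mul_comm (‖x‖ ^ n)]
  gcongr
  linarith

theorem norm_exp_sub_one_le_norm_mul_exp (x : ℂ) : ‖exp x - 1‖ ≤ ‖x‖ * Real.exp ‖x‖ := by
  simpa using norm_exp_sub_sum_le_norm_pow_div_mul_exp x 1

theorem norm_exp_sub_one_sub_self_le (x : ℂ) :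
    ‖exp x - 1 - x‖ ≤ ‖x‖ ^ 2 / 2 * Real.exp ‖x‖ := by
  simpa [Finset.sum_range_succ, sub_sub] using norm_exp_sub_sum_le_norm_pow_div_mul_exp x 2

theorem norm_exp_add_sub_exp_sub_le (z w : ℂ) :
    ‖exp (z + w) - exp w - z‖ ≤ (‖z‖ ^ 2 / 2 + ‖z‖ * ‖w‖) * Real.exp (‖z‖ + ‖w‖) := by
  have hsplit : exp (z + w) - exp w - z = exp w * (exp z - 1 - z) + (exp w - 1) * z := by
    rw [exp_add]; ring
  have hexp_w : ‖exp w‖ ≤ Real.exp ‖w‖ := norm_exp_le_exp_norm w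
  calc ‖exp (z + w) - exp w - z‖
      ≤ ‖exp w‖ * ‖exp z - 1 - z‖ + ‖exp w - 1‖ * ‖z‖ := by
        rw [hsplit, ← norm_mul, ← norm_mul]; exact norm_add_le _ _
    _ ≤ Real.exp ‖w‖ * (‖z‖ ^ 2 / 2 * Real.exp ‖z‖) + ‖w‖ * Real.exp ‖w‖ * ‖z‖ := by
        gcongr
        · exact norm_exp_sub_one_sub_self_le z
        · exact norm_exp_sub_one_le_norm_mul_exp w
    _ ≤ (‖z‖ ^ 2 / 2 + ‖z‖ * ‖w‖) * Real.exp (‖z‖ + ‖w‖) := by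
        have hgap : 0 ≤ ‖z‖ * ‖w‖ * Real.exp ‖w‖ * (Real.exp ‖z‖ - 1) := by
          have := Real.one_le_exp (norm_nonneg z)
          have : 0 ≤ Real.exp ‖z‖ - 1 := by linarith
          positivity
        rw [Real.exp_add]
        linarith [hgap]

end Complex

theorem tendsto_exp_linear_comb_exp_atBot (a b : ℝ) {α : ℝ} (hα : 0 < α) :
    Tendsto (fun y ↦ Real.exp (a * Real.exp y + b * Real.exp (α * y))) atBot (nhds 1) := by
  have h : Tendsto (fun y ↦ a * Real.exp y + b * Real.exp (α * y)) atBot (nhds 0) := by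
    simpa using (Real.tendsto_exp_atBot.const_mul a).add
      ((Real.tendsto_exp_atBot.comp (tendsto_id.const_mul_atBot hα)).const_mul b)
  simpa [Function.comp_def] using (Real.continuous_exp.tendsto 0).comp h

theorem stmt_10_general (α x' ω : ℝ) (Cp : ℂ) (hα : α ∈ Set.Ioo (0 : ℝ) 2) :
    ∃ Cf : ℝ → ℝ, Tendsto Cf atBot (nhds 1) ∧
      ∀ y : ℝ,
        ‖((Complex.exp (y : ℂ) *
              (Complex.exp (-Complex.I * (x' : ℂ) *
                    Complex.exp (Complex.I * (ω : ℂ) + (y : ℂ)) -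
                  Cp * Complex.exp ((α : ℂ) * (Complex.I * (ω : ℂ) + (y : ℂ)))) -
                Complex.exp (-(Cp *
                  Complex.exp ((α : ℂ) * (Complex.I * (ω : ℂ) + (y : ℂ))))))) -
            (-Complex.I * (x' : ℂ) * Complex.exp (Complex.I * (ω : ℂ)) *
              Complex.exp (2 * (y : ℂ))))‖ ≤
        Cf y * (x' ^ 2 * Real.exp (3 * y) / 2 +
          |x'| * ‖Cp‖ * Real.exp ((2 + α) * y)) := by
  refine ⟨fun y ↦ Real.exp (|x'| * Real.exp y + ‖Cp‖ * Real.exp (α * y)),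
    tendsto_exp_linear_comb_exp_atBot _ _ hα.1, fun y ↦ ?_⟩
  set z := -I * x' * exp (I * ω + y)
  set w := -(Cp * exp (α * (I * ω + y)))
  have hz : ‖z‖ = |x'| * Real.exp y := by simp [z, norm_exp]
  have hw : ‖w‖ = ‖Cp‖ * Real.exp (α * y) := by simp [w, norm_exp]
  have hrewrite :
      exp y * (exp (z - Cp * exp (α * (I * ω + y))) - exp w) - -I * x' * exp (I * ω) * exp (2 * y) =
        exp y * (exp (z + w) - exp w - z) := by
    simp only [z, w, ← sub_eq_add_neg, two_mul, exp_add]; ring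
  dsimp only
  rw [hrewrite, norm_mul, norm_exp_ofReal]
  calc Real.exp y * ‖exp (z + w) - exp w - z‖
      ≤ Real.exp y * ((‖z‖ ^ 2 / 2 + ‖z‖ * ‖w‖) * Real.exp (‖z‖ + ‖w‖)) := by
        gcongr; exact norm_exp_add_sub_exp_sub_le z w
    _ = _ := by
        rw [hz, hw, show 3 * y = y + y + y by ring, show (2 + α) * y = y + y + α * y by ring]
        simp only [Real.exp_add, mul_pow, sq_abs]
        ring

/-- Asymptotic expansion near y = −∞ of the integrand of the simplified conic
trapezoid rule for the pdf: with
f(y) = e^y [e^{−ix'e^{iω+y} − Cpe^{α(iω+y)}} − e^{−Cpe^{α(iω+y)}}],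
one has f(y) = −ix'e^{iω}e^{2y} + R(y), where
|R(y)| ≤ C(y)((x')²e^{3y}/2 + |x'||Cp|e^{(2+α)y}) and C(y) → 1 as y → −∞. -/
theorem stmt_10 (α x' ω φ₁ φ₂ : ℝ) (Cp : ℂ) (hα : α ∈ Set.Ioo (0 : ℝ) 2)
    (hx' : x' ≠ 0) (hφ : φ₁ < φ₂)
    (hC : ∀ φ ∈ Set.Ioo φ₁ φ₂,
      0 < (Cp * Complex.exp (Complex.I * (α : ℂ) * (φ : ℂ))).re) :
    ∃ Cf : ℝ → ℝ, Tendsto Cf atBot (nhds 1) ∧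
      ∀ y : ℝ,
        ‖((Complex.exp (y : ℂ) *
              (Complex.exp (-Complex.I * (x' : ℂ) *
                    Complex.exp (Complex.I * (ω : ℂ) + (y : ℂ)) -
                  Cp * Complex.exp ((α : ℂ) * (Complex.I * (ω : ℂ) + (y : ℂ)))) -
                Complex.exp (-(Cp *
                  Complex.exp ((α : ℂ) * (Complex.I * (ω : ℂ) + (y : ℂ))))))) -
            (-Complex.I * (x' : ℂ) * Complex.exp (Complex.I * (ω : ℂ)) *
              Complex.exp (2 * (y : ℂ))))‖ ≤
        Cf y * (x' ^ 2 * Real.exp (3 * y) / 2 +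
          |x'| * ‖Cp‖ * Real.exp ((2 + α) * y)) :=
  stmt_10_general α x' ω Cp hα
end

section
/- Let α ∈ (0,1), x' < 0, and C₊ = |C₊|e^{iφ₀}. Then the exponential change of variables ξ = e^{iω+y} with ω = π/2 yields the real-integral representation p(x') = (1/π) ∫_{ℝ} e^{y + x' e^{y} − |C₊| cos(φ₀ + απ/2) e^{αy}} · sin(|C₊| sin(φ₀ + απ/2) e^{αy}) dy for the stable density p(x') = (1/π) Re ∫₀^∞ e^{−ix'ξ − C₊ξ^α} dξ, provided −x' sin γ + |C₊| cos(φ₀ + αγ) > 0 for all γ in a neighborhood of π/2 (so the contour deformation from ℝ₊ to iℝ₊ is justified). -/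
/-!
Substituting `ξ = e^w` turns the integral into `∫_ℝ F` for the entire function
`F w = exp (w - i x' e^w - C₊ e^{αw})`, and on the line `Im w = π/2` the real part of `F` is the
stated integrand. So it suffices to move the line of integration from `ℝ` to `ℝ + iπ/2` by
Cauchy's theorem on rectangles. On the rectangles,
`log |F (y + iγ)| = y + x' e^y sin γ - |C₊| e^{αy} cos (φ₀ + αγ)`.
This is at most `y + |C₊|` for `y ≤ 0`, which kills the left sides. On the right sides, for
small `γ` the term `-|C₊| e^{αy} cos (φ₀ + αγ)` wins since `|φ₀| ≤ απ/2 < π/2`, and for `γ`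
away from `0` the term `x' e^y sin γ` wins since `α < 1`.
-/

open Complex Set
open Filter MeasureTheory Topology Asymptotics
open scoped Real

lemma tendsto_add_atBot_of_isLittleO {ι : Type*} {l : Filter ι} {u v : ι → ℝ}
    (hv : Tendsto v l atBot) (huv : u =o[l] v) : Tendsto (fun x => u x + v x) l atBot :=
  (huv.add_isEquivalent IsEquivalent.refl).symm.tendsto_atBot hv

lemma tendsto_mul_add_mul_exp_mul_atBot (a : ℝ) {q β : ℝ} (hq : q < 0) (hβ : 0 < β) :
    Tendsto (fun y => a * y + q * Real.exp (β * y)) atTop atBot := by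
  refine tendsto_add_atBot_of_isLittleO
    ((Real.tendsto_exp_atTop.comp (tendsto_id.const_mul_atTop hβ)).const_mul_atTop_of_neg hq) ?_
  simpa using ((isLittleO_pow_exp_pos_mul_atTop 1 hβ).const_mul_left a).const_mul_right hq.ne

lemma tendsto_mul_add_mul_exp_mul_add_mul_exp_atBot (a q : ℝ) {p α : ℝ} (hp : p < 0)
    (hα : α < 1) :
    Tendsto (fun y => a * y + q * Real.exp (α * y) + p * Real.exp y) atTop atBot := by
  refine tendsto_add_atBot_of_isLittleO (Real.tendsto_exp_atTop.const_mul_atTop_of_neg hp) ?_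
  have hlin : (fun y : ℝ => a * y) =o[atTop] Real.exp := by
    simpa using (Real.isLittleO_pow_exp_atTop (n := 1)).const_mul_left a
  have hexp : (fun y => Real.exp (α * y)) =o[atTop] fun y => Real.exp y := by
    refine Real.isLittleO_exp_comp_exp_comp.2 ?_
    simpa [← one_sub_mul] using tendsto_id.const_mul_atTop (sub_pos.2 hα)
  exact (hlin.add (hexp.const_mul_left q)).const_mul_right hp.ne

lemma integrable_exp_of_le_of_tendsto_atBot {f : ℝ → ℝ} (hf : Continuous f) {C : ℝ}
    (hle : ∀ y ≤ 0, f y ≤ y + C) (htop : Tendsto (fun y => f y + y) atTop atBot) :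
    Integrable fun y => Real.exp (f y) := by
  rw [← integrableOn_univ, ← Iic_union_Ioi (a := (0 : ℝ)), integrableOn_union]
  constructor
  · refine ((integrableOn_exp_Iic 0).const_mul (Real.exp C)).mono' (by fun_prop)
      ((ae_restrict_iff' measurableSet_Iic).2 (ae_of_all _ fun y hy => ?_))
    rw [Real.norm_eq_abs, Real.abs_exp, ← Real.exp_add]
    exact Real.exp_le_exp.2 (by linarith [hle y hy])
  · refine integrable_of_isBigO_exp_neg one_pos (by fun_prop) ?_
    refine Real.isBigO_exp_comp_exp_comp.2 ?_
    convert htop.isBoundedUnder_le_atBot using 2 with y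
    simp

lemma tendsto_intervalIntegral_zero_of_norm_le {E : Type*} [NormedAddCommGroup E]
    [NormedSpace ℝ E] {ι : Type*} {l : Filter ι} {f : ι → ℝ → E} {B : ι → ℝ} {a b : ℝ}
    (hB : Tendsto B l (𝓝 0)) (hf : ∀ᶠ i in l, ∀ t ∈ uIoc a b, ‖f i t‖ ≤ B i) :
    Tendsto (fun i => ∫ t in a..b, f i t) l (𝓝 0) := by
  refine squeeze_zero_norm' ?_ (by simpa using hB.mul_const |b - a|)
  filter_upwards [hf] with i hi
  exact intervalIntegral.norm_integral_le_of_norm_le_const hi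

lemma integral_Ioi_zero_eq_integral_exp_smul {E : Type*} [NormedAddCommGroup E]
    [NormedSpace ℝ E] (g : ℝ → E) :
    ∫ ξ in Ioi 0, g ξ = ∫ y, Real.exp y • g (Real.exp y) := by
  rw [← Real.range_exp, ← image_univ, integral_image_eq_integral_abs_deriv_smul
    MeasurableSet.univ (fun y _ => (Real.hasDerivAt_exp y).hasDerivWithinAt)
    Real.exp_injective.injOn, setIntegral_univ]
  simp_rw [abs_of_pos (Real.exp_pos _)]

theorem integral_eq_integral_add_mul_I_of_tendsto {E : Type*} [NormedAddCommGroup E]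
    [NormedSpace ℂ E] [CompleteSpace E] {f : ℂ → E} (hf : Differentiable ℂ f) (h : ℝ)
    (hint₀ : Integrable fun x : ℝ => f x) (hint₁ : Integrable fun x : ℝ => f (x + h * I))
    (htop : Tendsto (fun R : ℝ => ∫ t in (0)..h, f (R + t * I)) atTop (𝓝 0))
    (hbot : Tendsto (fun R : ℝ => ∫ t in (0)..h, f (R + t * I)) atBot (𝓝 0)) :
    ∫ x : ℝ, f x = ∫ x : ℝ, f (x + h * I) := by
  have hrect : ∀ R : ℝ, (∫ x in -R..R, f x) - (∫ x in -R..R, f (x + h * I)) +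
      I • (∫ t in (0)..h, f (R + t * I)) - I • (∫ t in (0)..h, f ((-R : ℝ) + t * I)) =
        0 := by
    intro R
    simpa using integral_boundary_rect_eq_zero_of_differentiableOn f (-R) (R + h * I)
      hf.differentiableOn
  have hlim := (((intervalIntegral_tendsto_integral hint₀ tendsto_neg_atTop_atBot tendsto_id).sub
    (intervalIntegral_tendsto_integral hint₁ tendsto_neg_atTop_atBot tendsto_id)).add
    (htop.const_smul I)).sub ((hbot.comp tendsto_neg_atTop_atBot).const_smul I)
  simp only [smul_zero, add_zero, sub_zero] at hlim
  exact sub_eq_zero.1 (tendsto_nhds_unique (hlim.congr hrect) tendsto_const_nhds)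

/-- `e^{-ix'ξ - C₊ξ^α}` after the substitution `ξ = e^w`, Jacobian included. -/
noncomputable def stableIntegrand (α x' : ℝ) (Cp : ℂ) (w : ℂ) : ℂ :=
  cexp (w - I * x' * cexp w - Cp * cexp (α * w))

noncomputable def stableExponentRe (α x' : ℝ) (Cp : ℂ) (y γ : ℝ) : ℝ :=
  y + x' * Real.exp y * Real.sin γ - ‖Cp‖ * Real.exp (α * y) * Real.cos (arg Cp + α * γ)

lemma exists_pos_le_cos_add_mul {φ α : ℝ} (hα : α < 1) (hφ : |φ| ≤ α * π / 2) :
    ∃ ε, (0 < ε ∧ ε ≤ π / 2) ∧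
      ∃ c > 0, ∀ γ ∈ Icc 0 ε, c ≤ Real.cos (φ + α * γ) := by
  have hπ := Real.pi_pos
  have hα0 : 0 ≤ α := by nlinarith [abs_nonneg φ]
  -- `α (π/2 + (1-α)π/2) < π/2` because `α (2 - α) < 1`
  have hθ : α * (π / 2 + (1 - α) * π / 2) < π / 2 := by
    nlinarith [mul_pos (pow_pos (sub_pos.2 hα) 2) hπ]
  have hθ0 : 0 ≤ α * (π / 2 + (1 - α) * π / 2) := mul_nonneg hα0 (by nlinarith)
  refine ⟨(1 - α) * π / 2, ⟨by nlinarith, by nlinarith⟩,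
    Real.cos (α * (π / 2 + (1 - α) * π / 2)),
    Real.cos_pos_of_mem_Ioo ⟨by linarith, hθ⟩, fun γ ⟨hγ0, hγε⟩ => ?_⟩
  have habs : |φ + α * γ| ≤ α * (π / 2 + (1 - α) * π / 2) := by
    have := abs_add_le φ (α * γ)
    rw [abs_of_nonneg (mul_nonneg hα0 hγ0)] at this
    nlinarith
  rw [← Real.cos_abs (φ + α * γ)]
  exact Real.cos_le_cos_of_nonneg_of_le_pi (abs_nonneg _) (by linarith) habs

section

variable {α x' : ℝ} {Cp : ℂ}

lemma differentiable_stableIntegrand : Differentiable ℂ (stableIntegrand α x' Cp) := by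
  unfold stableIntegrand
  fun_prop

lemma stableIntegrand_add_mul_I (y γ : ℝ) :
    stableIntegrand α x' Cp (y + γ * I) = cexp (stableExponentRe α x' Cp y γ +
      (γ - x' * Real.exp y * Real.cos γ -
        ‖Cp‖ * Real.exp (α * y) * Real.sin (arg Cp + α * γ) : ℝ) * I) := by
  rw [stableIntegrand, stableExponentRe]
  congr 1
  apply Complex.ext <;>
    simp only [add_re, add_im, sub_re, sub_im, mul_re, mul_im, ofReal_re, ofReal_im, I_re, I_im] <;>
    simp [exp_re, exp_im, Real.cos_add, Real.sin_add] <;>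
    rw [← norm_mul_cos_arg, ← norm_mul_sin_arg] <;> ring

lemma norm_stableIntegrand (y γ : ℝ) :
    ‖stableIntegrand α x' Cp (y + γ * I)‖ = Real.exp (stableExponentRe α x' Cp y γ) := by
  rw [stableIntegrand_add_mul_I, norm_exp]
  simp only [add_re, ofReal_re, re_ofReal_mul, I_re, mul_zero, add_zero]

lemma re_stableIntegrand_add_pi_div_two_mul_I (y : ℝ) :
    (stableIntegrand α x' Cp (y + (π / 2 : ℝ) * I)).re =
      Real.exp (y + x' * Real.exp y -
          ‖Cp‖ * Real.cos (arg Cp + α * π / 2) * Real.exp (α * y)) *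
        Real.sin (‖Cp‖ * Real.sin (arg Cp + α * π / 2) * Real.exp (α * y)) := by
  rw [stableIntegrand_add_mul_I, exp_re]
  simp only [add_re, ofReal_re, mul_re, I_re, mul_zero, ofReal_im, I_im, mul_one, sub_self,
    add_zero, add_im, mul_im, zero_add, stableExponentRe, Real.sin_pi_div_two,
    Real.cos_pi_div_two, sub_zero, Real.cos_pi_div_two_sub]
  rw [mul_div_assoc]
  ring_nf

lemma integral_Ioi_eq_integral_stableIntegrand :
    ∫ ξ in Ioi (0 : ℝ), cexp (-I * x' * ξ - Cp * (ξ : ℂ) ^ (α : ℂ)) =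
      ∫ y : ℝ, stableIntegrand α x' Cp y := by
  rw [integral_Ioi_zero_eq_integral_exp_smul]
  congr 1 with y
  rw [← ofReal_cpow (Real.exp_pos y).le, ← Real.exp_mul, stableIntegrand, real_smul,
    ofReal_exp, ofReal_exp, ← Complex.exp_add]
  push_cast
  ring_nf

lemma stableExponentRe_le_add_norm (hx' : x' ≤ 0) (hα : 0 ≤ α) {y γ : ℝ} (hy : y ≤ 0)
    (hγ : γ ∈ Icc 0 π) : stableExponentRe α x' Cp y γ ≤ y + ‖Cp‖ := by
  have hsin : x' * Real.exp y * Real.sin γ ≤ 0 := mul_nonpos_of_nonpos_of_nonneg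
    (mul_nonpos_of_nonpos_of_nonneg hx' (Real.exp_pos y).le) (Real.sin_nonneg_of_mem_Icc hγ)
  have hexp : ‖Cp‖ * Real.exp (α * y) ≤ ‖Cp‖ := mul_le_of_le_one_right (norm_nonneg Cp)
    (Real.exp_le_one_iff.2 (mul_nonpos_of_nonneg_of_nonpos hα hy))
  have hcos := Real.neg_one_le_cos (arg Cp + α * γ)
  unfold stableExponentRe
  nlinarith [mul_nonneg (norm_nonneg Cp) (Real.exp_pos (α * y)).le]

lemma stableExponentRe_le_max (hx' : x' ≤ 0) {ε c : ℝ} (hε : 0 ≤ ε)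
    (hc : ∀ γ ∈ Icc 0 ε, c ≤ Real.cos (arg Cp + α * γ)) (y : ℝ) {γ : ℝ}
    (hγ : γ ∈ Icc 0 (π / 2)) :
    stableExponentRe α x' Cp y γ ≤ max (y - c * ‖Cp‖ * Real.exp (α * y))
      (y + x' * Real.sin ε * Real.exp y + ‖Cp‖ * Real.exp (α * y)) := by
  have hxe : x' * Real.exp y ≤ 0 := mul_nonpos_of_nonpos_of_nonneg hx' (Real.exp_pos y).le
  have hr : 0 ≤ ‖Cp‖ * Real.exp (α * y) := by positivity
  unfold stableExponentRe
  rcases le_or_gt γ ε with hγε | hεγ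
  · have hsin : 0 ≤ Real.sin γ :=
      Real.sin_nonneg_of_nonneg_of_le_pi hγ.1 (by linarith [hγ.2, Real.pi_pos])
    refine le_max_of_le_left ?_
    nlinarith [hc γ ⟨hγ.1, hγε⟩, mul_nonpos_of_nonpos_of_nonneg hxe hsin]
  · have hsin : Real.sin ε ≤ Real.sin γ :=
      Real.sin_le_sin_of_le_of_le_pi_div_two (by linarith [Real.pi_pos]) hγ.2 hεγ.le
    refine le_max_of_le_right ?_
    nlinarith [Real.neg_one_le_cos (arg Cp + α * γ), mul_le_mul_of_nonpos_left hsin hxe]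

lemma tendsto_stableExponentRe_zero_add_atBot (hα : 0 < α)
    (hcos : 0 < ‖Cp‖ * Real.cos (arg Cp)) :
    Tendsto (fun y => stableExponentRe α x' Cp y 0 + y) atTop atBot :=
  (tendsto_mul_add_mul_exp_mul_atBot 2 (neg_neg_of_pos hcos) hα).congr fun y => by
    simp only [stableExponentRe, Real.sin_zero, mul_zero, add_zero]
    ring

lemma tendsto_stableExponentRe_pi_div_two_add_atBot (hx' : x' < 0) (hα : α < 1) :
    Tendsto (fun y => stableExponentRe α x' Cp y (π / 2) + y) atTop atBot :=
  (tendsto_mul_add_mul_exp_mul_add_mul_exp_atBot 2 (-(‖Cp‖ * Real.cos (arg Cp + α * (π / 2))))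
    hx' hα).congr fun y => by
    simp only [stableExponentRe, Real.sin_pi_div_two]
    ring

lemma integrable_stableIntegrand (hx' : x' ≤ 0) (hα : 0 ≤ α) {γ : ℝ}
    (hγ : γ ∈ Icc 0 π)
    (htop : Tendsto (fun y => stableExponentRe α x' Cp y γ + y) atTop atBot) :
    Integrable fun y : ℝ => stableIntegrand α x' Cp (y + γ * I) := by
  refine (integrable_exp_of_le_of_tendsto_atBot (by unfold stableExponentRe; fun_prop)
    (fun y hy => stableExponentRe_le_add_norm hx' hα hy hγ) htop).mono'
    (by unfold stableIntegrand; fun_prop) (ae_of_all _ fun y => ?_)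
  rw [norm_stableIntegrand]

lemma tendsto_integral_stableIntegrand_atBot (hx' : x' ≤ 0) (hα : 0 ≤ α) :
    Tendsto (fun R : ℝ => ∫ t in (0)..π / 2, stableIntegrand α x' Cp (R + t * I)) atBot
      (𝓝 0) := by
  refine tendsto_intervalIntegral_zero_of_norm_le (B := fun R => Real.exp (R + ‖Cp‖))
    (Real.tendsto_exp_atBot.comp (tendsto_atBot_add_const_right _ ‖Cp‖ tendsto_id)) ?_
  filter_upwards [eventually_le_atBot 0] with R hR t ht
  rw [uIoc_of_le (by positivity)] at ht
  rw [norm_stableIntegrand, Real.exp_le_exp]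
  exact stableExponentRe_le_add_norm hx' hα hR ⟨ht.1.le, by linarith [ht.2, Real.pi_pos]⟩

lemma tendsto_integral_stableIntegrand_atTop (hx' : x' < 0) (hα : α ∈ Ioo 0 1) (hCp : Cp ≠ 0)
    (hφ : |arg Cp| ≤ α * π / 2) :
    Tendsto (fun R : ℝ => ∫ t in (0)..π / 2, stableIntegrand α x' Cp (R + t * I)) atTop
      (𝓝 0) := by
  obtain ⟨ε, hε, c, hc, hcos⟩ := exists_pos_le_cos_add_mul hα.2 hφ
  have hsin : 0 < Real.sin ε := Real.sin_pos_of_pos_of_lt_pi hε.1 (by linarith [Real.pi_pos])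
  have hA := tendsto_mul_add_mul_exp_mul_atBot 1
    (neg_neg_of_pos (mul_pos hc (norm_pos_iff.2 hCp))) hα.1
  have hB := tendsto_mul_add_mul_exp_mul_add_mul_exp_atBot 1 ‖Cp‖
    (mul_neg_of_neg_of_pos hx' hsin) hα.2
  refine tendsto_intervalIntegral_zero_of_norm_le
    (B := fun R => Real.exp (max (R - c * ‖Cp‖ * Real.exp (α * R))
      (R + x' * Real.sin ε * Real.exp R + ‖Cp‖ * Real.exp (α * R))))
    (Real.tendsto_exp_atBot.comp (tendsto_atBot.2 fun b => ?_)) (Eventually.of_forall ?_)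
  · filter_upwards [tendsto_atBot.1 hA b, tendsto_atBot.1 hB b] with R hAR hBR
    exact max_le (by linarith) (by linarith)
  · intro R t ht
    rw [uIoc_of_le (by positivity)] at ht
    rw [norm_stableIntegrand, Real.exp_le_exp]
    exact stableExponentRe_le_max hx'.le hε.1.le hcos R ⟨ht.1.le, ht.2⟩

end

theorem stmt_11_general (α x' : ℝ) (Cp : ℂ) (hα : α ∈ Set.Ioo (0 : ℝ) 1) (hx' : x' < 0)
    (hCp : Cp ≠ 0)
    (hφ₀ : Complex.arg Cp ∈ Set.Icc (-(α * Real.pi / 2)) (α * Real.pi / 2)) :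
    (1 / Real.pi) * (∫ ξ in Set.Ioi (0 : ℝ),
        Complex.exp (-Complex.I * (x' : ℂ) * (ξ : ℂ) - Cp * (ξ : ℂ) ^ (α : ℂ))).re =
    (1 / Real.pi) * ∫ y : ℝ,
        Real.exp (y + x' * Real.exp y -
            ‖Cp‖ * Real.cos (Complex.arg Cp + α * Real.pi / 2) *
              Real.exp (α * y)) *
          Real.sin (‖Cp‖ * Real.sin (Complex.arg Cp + α * Real.pi / 2) *
            Real.exp (α * y)) := by
  have hφ : |arg Cp| ≤ α * π / 2 := abs_le.2 hφ₀
  have hφ' : |arg Cp| < π / 2 := hφ.trans_lt (by nlinarith [hα.2, Real.pi_pos])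
  have hcos : 0 < ‖Cp‖ * Real.cos (arg Cp) :=
    mul_pos (norm_pos_iff.2 hCp) (Real.cos_pos_of_mem_Ioo (abs_lt.1 hφ'))
  have hint₀ : Integrable fun y : ℝ => stableIntegrand α x' Cp y := by
    simpa using integrable_stableIntegrand hx'.le hα.1.le ⟨le_rfl, Real.pi_pos.le⟩
      (tendsto_stableExponentRe_zero_add_atBot hα.1 hcos)
  have hint₁ : Integrable fun y : ℝ => stableIntegrand α x' Cp (y + (π / 2 : ℝ) * I) :=
    integrable_stableIntegrand hx'.le hα.1.le ⟨by positivity, by linarith [Real.pi_pos]⟩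
      (tendsto_stableExponentRe_pi_div_two_add_atBot hx' hα.2)
  rw [integral_Ioi_eq_integral_stableIntegrand, integral_eq_integral_add_mul_I_of_tendsto
    differentiable_stableIntegrand (π / 2) hint₀ hint₁
    (tendsto_integral_stableIntegrand_atTop hx' hα hCp hφ)
    (tendsto_integral_stableIntegrand_atBot hx'.le hα.1.le), ← RCLike.re_to_complex,
    ← integral_re hint₁]
  simp only [RCLike.re_to_complex, re_stableIntegrand_add_pi_div_two_mul_I]

/-- For α ∈ (0,1), x' < 0, C₊ = |C₊|e^{iφ₀}, the exponential change of variables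
ξ = e^{iπ/2+y} gives the real-integral representation of the stable pdf
p(x') = (1/π) Re ∫₀^∞ e^{−ix'ξ − C₊ξ^α} dξ
      = (1/π) ∫ℝ e^{y + x'e^y − |C₊|cos(φ₀+απ/2)e^{αy}} sin(|C₊|sin(φ₀+απ/2)e^{αy}) dy,
provided −x' sin γ + |C₊| cos(φ₀ + αγ) > 0 for all γ in a neighborhood of π/2. -/
theorem stmt_11 (α x' d : ℝ) (Cp : ℂ) (hα : α ∈ Set.Ioo (0 : ℝ) 1) (hx' : x' < 0)
    (hCp : Cp ≠ 0)
    (hφ₀ : Complex.arg Cp ∈ Set.Icc (-(α * Real.pi / 2)) (α * Real.pi / 2))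
    (hd : 0 < d)
    (hcone : ∀ γ ∈ Set.Ioo (Real.pi / 2 - d) (Real.pi / 2 + d),
      0 < -x' * Real.sin γ +
        ‖Cp‖ * Real.cos (Complex.arg Cp + α * γ)) :
    (1 / Real.pi) * (∫ ξ in Set.Ioi (0 : ℝ),
        Complex.exp (-Complex.I * (x' : ℂ) * (ξ : ℂ) - Cp * (ξ : ℂ) ^ (α : ℂ))).re =
    (1 / Real.pi) * ∫ y : ℝ,
        Real.exp (y + x' * Real.exp y -
            ‖Cp‖ * Real.cos (Complex.arg Cp + α * Real.pi / 2) *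
              Real.exp (α * y)) *
          Real.sin (‖Cp‖ * Real.sin (Complex.arg Cp + α * Real.pi / 2) *
            Real.exp (α * y)) :=
  stmt_11_general α x' Cp hα hx' hCp hφ₀
end
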